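/- arXiv:1707.03485 — 14 statements merged into one kernel-verified Lean document; each statement's English description precedes it below -/
import Mathlib

section
/- Let (A, |·|_A) and (B, |·|_B) be normed Abelian groups that have nonbranching optimal transport plans, and let λ, μ > 0. Then the direct product A × B equipped with the norm |(a,b)| := λ|a|_A + μ|b|_B also has nonbranching optimal transport plans. -/
def IsGroupNorm {G : Type*} [AddCommGroup G] (ν : G → ℝ) : Prop :=
  (∀ g, 0 ≤ ν g) ∧ (∀ g h, ν (g + h) ≤ ν g + ν h) ∧
  (∀ g, ν (-g) = ν g) ∧ (∀ g, ν g = 0 ↔ g = 0)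

def HasNBP {G : Type*} [AddCommGroup G] (ν : G → ℝ) : Prop :=
  ∀ (n : ℕ) (g : Fin n → G), (∑ i, g i) = 0 →
    ∃ f : Fin n → Fin n → G,
      (∀ i j, f i j = - f j i) ∧ (∀ i, f i i = 0) ∧
      (∀ i, g i = ∑ j, f i j) ∧ (∀ i, ν (g i) = ∑ j, ν (f i j))

def HasCZT {G : Type*} [AddCommGroup G] (ν : G → ℝ) : Prop :=
  ∀ a b c : G, a + b + c = 0 →
    ν a + ν b = ν c ∨ ν a + ν c = ν b ∨ ν b + ν c = ν a

def IsIndecomposable {G : Type*} [AddCommGroup G] (ν : G → ℝ) (g : G) : Prop :=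
  ∀ h : G, ν h + ν (g - h) = ν g → h = 0 ∨ h = g

theorem stmt0 {A B : Type*} [AddCommGroup A] [AddCommGroup B]
    (νA : A → ℝ) (νB : B → ℝ) (hνA : IsGroupNorm νA) (hνB : IsGroupNorm νB)
    (hA : HasNBP νA) (hB : HasNBP νB) (lam mu : ℝ) (hlam : 0 < lam) (hmu : 0 < mu) :
    HasNBP (fun p : A × B => lam * νA p.1 + mu * νB p.2) := by
  intro n g hg
  obtain ⟨fA, hA1, hA2, hA3, hA4⟩ := hA n (fun i => (g i).1) (by
    have := congrArg Prod.fst hg; simpa [Prod.fst_sum] using this)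
  obtain ⟨fB, hB1, hB2, hB3, hB4⟩ := hB n (fun i => (g i).2) (by
    have := congrArg Prod.snd hg; simpa [Prod.snd_sum] using this)
  refine ⟨fun i j => (fA i j, fB i j), ?_, ?_, ?_, ?_⟩
  · intro i j; exact Prod.ext (by simpa using hA1 i j) (by simpa using hB1 i j)
  · intro i; exact Prod.ext (by simpa using hA2 i) (by simpa using hB2 i)
  · intro i; exact Prod.ext (by simpa [Prod.fst_sum] using hA3 i) (by simpa [Prod.snd_sum] using hB3 i)
  · intro i
    simp only []
    rw [hA4 i, hB4 i, Finset.mul_sum, Finset.mul_sum, ← Finset.sum_add_distrib]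
end

section
/- The group ℝ with the Archimedean norm |x| = abs(x) has nonbranching optimal transport plans: for every g_1,…,g_n ∈ ℝ with Σ g_i = 0 there exist real numbers g_{ij} with g_{ij} = -g_{ji}, g_{ii} = 0, g_i = Σ_j g_{ij}, and |g_i| = Σ_j |g_{ij}| for all i. -/
/-!
Split every `g i` into a supply `(g i)⁺` and a demand `(g i)⁻`. Since `∑ g i = 0`, total supply
equals total demand `S`, and the proportional plan ships `(g i)⁺ (g j)⁻ / S` from `i` to `j`.
No point is both a source and a sink, so the flows out of (or into) `i` all have the same sign and
their absolute values add up to `|g i|`.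
-/

open Finset

lemma mul_div_cancel_of_nonneg_of_le {K : Type*} [Field K] [PartialOrder K] {x S : K}
    (hx : 0 ≤ x) (hxS : x ≤ S) : x * S / S = x := by
  rcases eq_or_ne S 0 with rfl | hS
  · simp [le_antisymm hxS hx]
  · exact mul_div_cancel_right₀ x hS

section

variable {K : Type*} [Field K] [LinearOrder K] {ι : Type*} [Fintype ι]

def transportPlan (g : ι → K) (i j : ι) : K :=
  ((g i)⁺ * (g j)⁻ - (g i)⁻ * (g j)⁺) / ∑ k, (g k)⁺

lemma transportPlan_antisymm (g : ι → K) (i j : ι) :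
    transportPlan g i j = -transportPlan g j i := by
  unfold transportPlan
  ring

lemma transportPlan_self (g : ι → K) (i : ι) : transportPlan g i i = 0 := by
  simp [transportPlan, mul_comm]

variable [IsStrictOrderedRing K]

lemma posPart_mul_negPart_eq_zero (a : K) : a⁺ * a⁻ = 0 := by
  rcases le_total a 0 with h | h
  · rw [posPart_eq_zero.2 h, zero_mul]
  · rw [negPart_eq_zero.2 h, mul_zero]

lemma abs_sub_eq_add_of_mul_eq_zero {x y : K} (hx : 0 ≤ x) (hy : 0 ≤ y) (hxy : x * y = 0) :
    |x - y| = x + y := by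
  rcases mul_eq_zero.1 hxy with rfl | rfl
  · simp [abs_of_nonneg hy]
  · simp [abs_of_nonneg hx]

lemma abs_transportPlan (g : ι → K) (i j : ι) :
    |transportPlan g i j| = ((g i)⁺ * (g j)⁻ + (g i)⁻ * (g j)⁺) / ∑ k, (g k)⁺ := by
  have hprod : (g i)⁺ * (g j)⁻ * ((g i)⁻ * (g j)⁺) = 0 := by
    rw [mul_mul_mul_comm, posPart_mul_negPart_eq_zero, zero_mul]
  rw [transportPlan, abs_div, abs_of_nonneg (sum_nonneg fun k _ => posPart_nonneg (g k)),
    abs_sub_eq_add_of_mul_eq_zero (by positivity) (by positivity) hprod]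

lemma sum_posPart_eq_sum_negPart {g : ι → K} (hg : ∑ i, g i = 0) :
    ∑ i, (g i)⁺ = ∑ i, (g i)⁻ := by
  rw [← sub_eq_zero, ← sum_sub_distrib]
  simpa only [posPart_sub_negPart] using hg

variable {g : ι → K} (hg : ∑ i, g i = 0)
include hg

lemma sum_posPart_mul_negPart_div (i : ι) :
    ∑ j, (g i)⁺ * (g j)⁻ / ∑ k, (g k)⁺ = (g i)⁺ := by
  rw [← sum_div, ← mul_sum, ← sum_posPart_eq_sum_negPart hg]
  exact mul_div_cancel_of_nonneg_of_le (posPart_nonneg _)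
    (single_le_sum (fun k _ => posPart_nonneg (g k)) (mem_univ i))

lemma sum_negPart_mul_posPart_div (i : ι) :
    ∑ j, (g i)⁻ * (g j)⁺ / ∑ k, (g k)⁺ = (g i)⁻ := by
  rw [← sum_div, ← mul_sum, sum_posPart_eq_sum_negPart hg]
  exact mul_div_cancel_of_nonneg_of_le (negPart_nonneg _)
    (single_le_sum (fun k _ => negPart_nonneg (g k)) (mem_univ i))

lemma sum_transportPlan (i : ι) : ∑ j, transportPlan g i j = g i := by
  simp only [transportPlan, sub_div, sum_sub_distrib, sum_posPart_mul_negPart_div hg,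
    sum_negPart_mul_posPart_div hg, posPart_sub_negPart]

lemma sum_abs_transportPlan (i : ι) : ∑ j, |transportPlan g i j| = |g i| := by
  simp only [abs_transportPlan, add_div, sum_add_distrib, sum_posPart_mul_negPart_div hg,
    sum_negPart_mul_posPart_div hg, posPart_add_negPart]

end

theorem stmt2 : HasNBP (fun x : ℝ => |x|) := fun _ _ hg =>
  ⟨transportPlan _, transportPlan_antisymm _, transportPlan_self _,
    fun i => (sum_transportPlan hg i).symm, fun i => (sum_abs_transportPlan hg i).symm⟩
end

section
/- Let G be a normed Abelian group with nonbranching optimal transport plans and let g ∈ G \ {0} be indecomposable. If 2g ≠ 0, then |ng| = n|g| for all natural numbers n. -/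
/-!
Apply the nonbranching property to the balanced family `g, …, g, -(n • g)`. Every row of a
copy of `g` splits `g` with equality in the triangle inequality, so by indecomposability its
entries are `0` or `g`. By antisymmetry, and since `g ≠ -g`, the entries between two copies
of `g` vanish, so each copy sends all of `g` to the last point. The row of `-(n • g)` then
consists of `n` entries `-g`, whence `ν (n • g) = n * ν g`.
-/

open Finset

namespace IsGroupNorm

variable {G : Type*} [AddCommGroup G] {ν : G → ℝ}

lemma map_zero (hν : IsGroupNorm ν) : ν 0 = 0 := (hν.2.2.2 0).2 rfl

lemma map_neg (hν : IsGroupNorm ν) (g : G) : ν (-g) = ν g := hν.2.2.1 g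

lemma map_add_le (hν : IsGroupNorm ν) (g h : G) : ν (g + h) ≤ ν g + ν h := hν.2.1 g h

lemma map_sum_le (hν : IsGroupNorm ν) {ι : Type*} (s : Finset ι) (x : ι → G) :
    ν (∑ i ∈ s, x i) ≤ ∑ i ∈ s, ν (x i) :=
  le_sum_of_subadditive ν hν.map_zero.le hν.map_add_le s x

lemma add_map_sub_eq_of_map_sum_eq (hν : IsGroupNorm ν) {ι : Type*} [Fintype ι]
    [DecidableEq ι] (x : ι → G) (hx : ν (∑ i, x i) = ∑ i, ν (x i)) (j : ι) :
    ν (x j) + ν (∑ i, x i - x j) = ν (∑ i, x i) := by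
  refine le_antisymm ?_ (by simpa using hν.map_add_le (x j) (∑ i, x i - x j))
  have hrest : ν (∑ i, x i - x j) ≤ ∑ i, ν (x i) - ν (x j) := by
    rw [← sum_erase_eq_sub (mem_univ j), ← sum_erase_eq_sub (mem_univ j)]
    exact hν.map_sum_le _ x
  linarith

end IsGroupNorm

lemma IsIndecomposable.eq_zero_or_eq_of_map_sum_eq {G : Type*} [AddCommGroup G] {ν : G → ℝ}
    {g : G} (hind : IsIndecomposable ν g) (hν : IsGroupNorm ν) {ι : Type*} [Fintype ι]
    (x : ι → G) (hsum : g = ∑ i, x i) (hnorm : ν g = ∑ i, ν (x i)) (j : ι) :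
    x j = 0 ∨ x j = g := by
  classical
  subst hsum
  exact hind _ (hν.add_map_sub_eq_of_map_sum_eq x hnorm j)

lemma eq_zero_of_mem_pair_of_neg_mem_pair {G : Type*} [AddCommGroup G] {a g : G}
    (hg : (2 : ℤ) • g ≠ 0) (ha : a = 0 ∨ a = g) (hna : -a = 0 ∨ -a = g) : a = 0 := by
  rcases ha with rfl | rfl
  · rfl
  · refine absurd ?_ hg
    rcases hna with h | h
    · simp [neg_eq_zero.1 h]
    · rw [two_zsmul]
      nth_rewrite 1 [← h]
      exact neg_add_cancel _

theorem stmt3_general {G : Type*} [AddCommGroup G] (ν : G → ℝ) (hν : IsGroupNorm ν)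
    (hNBP : HasNBP ν) (g : G) (hind : IsIndecomposable ν g)
    (h2 : (2 : ℤ) • g ≠ 0) :
    ∀ n : ℕ, ν (n • g) = n * ν g := by
  intro n
  set v : Fin (n + 1) → G := Fin.snoc (fun _ => g) (-(n • g))
  have hv : ∑ i, v i = 0 := by simp [v, Fin.sum_univ_castSucc]
  obtain ⟨f, hanti, hdiag, hsum, hnorm⟩ := hNBP (n + 1) v hv
  have hrow : ∀ (i : Fin n) j, f i.castSucc j = 0 ∨ f i.castSucc j = g := fun i =>
    hind.eq_zero_or_eq_of_map_sum_eq hν _ (by simpa [v] using hsum i.castSucc)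
      (by simpa [v] using hnorm i.castSucc)
  have hcross : ∀ i j : Fin n, f i.castSucc j.castSucc = 0 := fun i j =>
    eq_zero_of_mem_pair_of_neg_mem_pair h2 (hrow i _) (by rw [← hanti]; exact hrow j _)
  have hcol : ∀ i : Fin n, f (Fin.last n) i.castSucc = -g := by
    intro i
    have hgi := hsum i.castSucc
    simp only [v, Fin.snoc_castSucc, Fin.sum_univ_castSucc, hcross, sum_const_zero,
      zero_add] at hgi
    rw [hanti, ← hgi]
  calc ν (n • g) = ν (v (Fin.last n)) := by simp [v, hν.map_neg]
    _ = ∑ j, ν (f (Fin.last n) j) := hnorm _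
    _ = n * ν g := by simp [Fin.sum_univ_castSucc, hcol, hdiag, hν.map_neg, hν.map_zero]

theorem stmt3 {G : Type*} [AddCommGroup G] (ν : G → ℝ) (hν : IsGroupNorm ν)
    (hNBP : HasNBP ν) (g : G) (hg : g ≠ 0) (hind : IsIndecomposable ν g)
    (h2 : (2 : ℤ) • g ≠ 0) :
    ∀ n : ℕ, ν (n • g) = n * ν g :=
  stmt3_general ν hν hNBP g hind h2
end

section
/- Let G be a normed Abelian group with nonbranching optimal transport plans, let g ∈ G \ {0} be indecomposable, and suppose h ∈ G and n ∈ ℤ satisfy |h| + |ng - h| = |ng|. Then h is an integer multiple of g. -/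
theorem key_nat {G : Type*} [AddCommGroup G] (ν : G → ℝ) (hν : IsGroupNorm ν)
    (hNBP : HasNBP ν) (g : G) (hg : g ≠ 0) (hind : IsIndecomposable ν g) :
    ∀ n : ℕ, ∀ h : G, ν h + ν (n • g - h) = ν (n • g) → ∃ k : ℤ, h = k • g := by
  obtain ⟨hpos, htri, hsym, hzero⟩ := hν
  have hz0 : ν 0 = 0 := (hzero 0).mpr rfl
  have hgpos : 0 < ν g := by
    rcases lt_or_eq_of_le (hpos g) with h | h
    · exact h
    · exact absurd ((hzero g).mp h.symm) hg
  intro n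
  induction n with
  | zero =>
    intro h heq
    rw [zero_nsmul, zero_sub, hsym, hz0] at heq
    have h1 := hpos h
    have h2 : ν h = 0 := by linarith
    exact ⟨0, by rw [zero_smul]; exact (hzero h).mp h2⟩
  | succ n ih =>
    intro h heq
    obtain ⟨f, hanti, hdiag, hsum, hns⟩ :=
      hNBP 4 ![h, (n+1) • g - h, -g, -(n • g)] (by
        rw [Fin.sum_univ_four]
        simp only [Matrix.cons_val_zero, Matrix.cons_val_one, Matrix.head_cons,
          Matrix.cons_val_two, Matrix.tail_cons, Matrix.cons_val_three]
        rw [succ_nsmul]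
        abel)
    have hr0 := hsum 0; have hr1 := hsum 1; have hr2 := hsum 2; have hr3 := hsum 3
    have hn0 := hns 0; have hn1 := hns 1; have hn2 := hns 2; have hn3 := hns 3
    simp only [Fin.sum_univ_four, Matrix.cons_val_zero, Matrix.cons_val_one, Matrix.head_cons,
      Matrix.cons_val_two, Matrix.tail_cons, Matrix.cons_val_three, hdiag, hz0, zero_add,
      add_zero] at hr0 hr1 hr2 hr3 hn0 hn1 hn2 hn3
    rw [hanti 1 0] at hr1
    rw [hanti 1 0, hsym (f 0 1)] at hn1
    rw [hanti 2 0, hanti 2 1] at hr2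
    rw [hanti 2 0, hanti 2 1, hsym (f 0 2), hsym (f 1 2), hsym g] at hn2
    rw [hanti 3 0, hanti 3 1, hanti 3 2] at hr3
    rw [hanti 3 0, hanti 3 1, hanti 3 2, hsym (f 0 3), hsym (f 1 3), hsym (f 2 3),
      hsym (n • g)] at hn3
    set a := f 0 1 with ha
    set b := f 0 2 with hb'
    set c := f 0 3 with hc'
    set d := f 1 2 with hd'
    set e := f 1 3 with he'
    set p := f 2 3 with hp'
    -- hr0 : h = a + b + c ; hn0 : ν h = ν a + ν b + ν c
    -- hr1 : (n+1)•g - h = -a + d + e ; hn1 : ν ((n+1)•g - h) = ν a + ν d + ν e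
    -- hr2 : -g = -b + -d + p ; hn2 : ν g = ν b + ν d + ν p
    -- hr3 : -(n•g) = -c + -e + -p ; hn3 : ν (n•g) = ν c + ν e + ν p
    have split : ∀ x : G, ν x + ν (-g - x) ≤ ν g → x = 0 ∨ x = -g := by
      intro x hx
      have h1 : ν g ≤ ν x + ν (-g - x) := by
        have t := htri x (-g - x)
        have h2 : x + (-g - x) = -g := by abel
        rw [h2, hsym] at t
        exact t
      have h3 : g - -x = -(-g - x) := by abel
      have heqg : ν (-x) + ν (g - -x) = ν g := by
        rw [h3, hsym (-g - x), hsym x]; linarith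
      rcases hind (-x) heqg with h' | h'
      · exact Or.inl (neg_eq_zero.mp h')
      · exact Or.inr (neg_eq_iff_eq_neg.mp h')
    have hbc : b = 0 ∨ b = g := by
      have t : ν (-g - -b) ≤ ν (-d) + ν p := by
        have h2 : -g - -b = -d + p := by rw [hr2]; abel
        rw [h2]; exact htri _ _
      have hx : ν (-b) + ν (-g - -b) ≤ ν g := by
        rw [hsym b]; rw [hsym d] at t; linarith
      rcases split (-b) hx with h' | h'
      · exact Or.inl (neg_eq_zero.mp h')
      · exact Or.inr (neg_inj.mp h')
    have hdc : d = 0 ∨ d = g := by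
      have t : ν (-g - -d) ≤ ν (-b) + ν p := by
        have h2 : -g - -d = -b + p := by rw [hr2]; abel
        rw [h2]; exact htri _ _
      have hx : ν (-d) + ν (-g - -d) ≤ ν g := by
        rw [hsym d]; rw [hsym b] at t; linarith
      rcases split (-d) hx with h' | h'
      · exact Or.inl (neg_eq_zero.mp h')
      · exact Or.inr (neg_inj.mp h')
    have hpc : p = 0 ∨ p = -g := by
      have t : ν (-g - p) ≤ ν (-b) + ν (-d) := by
        have h2 : -g - p = -b + -d := by rw [hr2]; abel
        rw [h2]; exact htri _ _
      have hx : ν p + ν (-g - p) ≤ ν g := by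
        rw [hsym b, hsym d] at t; linarith
      exact split p hx
    -- triangle facts reused
    have lo : ν (n • g) ≤ ν h + ν (n • g - h) := by
      have t := htri h (n • g - h); rwa [add_sub_cancel] at t
    have le1 : ν ((n+1) • g) ≤ ν (n • g) + ν g := by
      rw [succ_nsmul]; exact htri _ _
    rcases hbc with hb0 | hbg
    · rcases hdc with hd0 | hdg
      · rcases hpc with hp0 | hpg
        · -- all zero: contradiction
          exfalso
          rw [hb0, hd0, hp0] at hr2
          apply hg
          have : -g = 0 := by simpa using hr2
          exact neg_eq_zero.mp this
        · -- Case C : p = -g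
          rw [hpg, neg_neg] at hr3
          rw [hpg, hsym g] at hn3
          have hce : c + e = (n+1) • g := by
            have h6 : c + e - ((n+1) • g) = -(n • g) - (-c + -e + g) := by
              rw [succ_nsmul]; abel
            rw [hr3, sub_self] at h6
            exact sub_eq_zero.mp h6
          have leC : ν ((n+1) • g) ≤ ν c + ν e := by
            rw [← hce]; exact htri c e
          rw [hb0, hz0] at hn0
          rw [hd0, hz0] at hn1
          have ha0 : ν a = 0 := le_antisymm (by linarith) (hpos a)
          have haz : a = 0 := (hzero a).mp ha0
          have hhc : h = c := by rw [hr0, hb0, haz]; abel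
          have t : ν (n • g - h) ≤ ν ((n+1) • g - h) + ν g := by
            have hh : n • g - h = ((n+1) • g - h) + -g := by rw [succ_nsmul]; abel
            rw [hh]
            have t2 := htri ((n+1) • g - h) (-g)
            rwa [hsym g] at t2
          have ihh : ν h + ν (n • g - h) = ν (n • g) := by linarith
          exact ih h ihh
      · rcases hpc with hp0 | hpg
        · -- Case B : d = g
          rw [hdg] at hr1 hn1
          have key1 : ν (n • g - h) ≤ ν a + ν e := by
            have hh : n • g - h = -a + e := by
              have h6 : n • g - h - (-a + e) = ((n+1) • g - h) - (-a + g + e) := by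
                rw [succ_nsmul]; abel
              rw [hr1, sub_self] at h6
              exact sub_eq_zero.mp h6
            rw [hh]
            have t2 := htri (-a) e
            rwa [hsym a] at t2
          have ihh : ν h + ν (n • g - h) = ν (n • g) := by linarith
          exact ih h ihh
        · -- d = g and p = -g : contradiction
          exfalso
          rw [hdg, hpg, hsym g] at hn2
          have := hpos b
          linarith
    · rcases hdc with hd0 | hdg
      · rcases hpc with hp0 | hpg
        · -- Case A : b = g
          rw [hbg] at hr0 hn0
          have t1 : ν (h - g) ≤ ν a + ν c := by
            have hh : h - g = a + c := by rw [hr0]; abel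
            rw [hh]; exact htri a c
          have t2 : ν h ≤ ν (h - g) + ν g := by
            have t := htri (h - g) g
            rwa [sub_add_cancel] at t
          have key1 : n • g - (h - g) = (n+1) • g - h := by rw [succ_nsmul]; abel
          have le2 : ν (n • g) ≤ ν (h - g) + ν ((n+1) • g - h) := by
            have t := htri (h - g) (n • g - (h - g))
            rw [add_sub_cancel, key1] at t
            exact t
          have ihh : ν (h - g) + ν (n • g - (h - g)) = ν (n • g) := by
            rw [key1]; linarith
          obtain ⟨k, hk⟩ := ih (h - g) ihh
          exact ⟨k + 1, by rw [add_smul, one_smul, ← hk]; abel⟩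
        · -- b = g, p = -g : contradiction
          exfalso
          rw [hbg, hpg, hsym g] at hn2
          have := hpos d
          linarith
      · -- b = g, d = g : contradiction
        exfalso
        rw [hbg, hdg] at hn2
        have := hpos p
        linarith

theorem stmt4 {G : Type*} [AddCommGroup G] (ν : G → ℝ) (hν : IsGroupNorm ν)
    (hNBP : HasNBP ν) (g : G) (hg : g ≠ 0) (hind : IsIndecomposable ν g)
    (h : G) (n : ℤ) (heq : ν h + ν (n • g - h) = ν (n • g)) :
    ∃ k : ℤ, h = k • g := by
  rcases le_or_gt 0 n with h0 | h0
  · obtain ⟨m, rfl⟩ := Int.eq_ofNat_of_zero_le h0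
    rw [natCast_zsmul] at heq
    exact key_nat ν hν hNBP g hg hind m h heq
  · set m := (-n).toNat with hm'
    have hm : (m : ℤ) = -n := Int.toNat_of_nonneg (by omega)
    have hg' : -g ≠ 0 := neg_ne_zero.mpr hg
    have hind' : IsIndecomposable ν (-g) := by
      intro x hx
      obtain ⟨hpos, htri, hsym, hzero⟩ := hν
      have e1 : g - -x = -(-g - x) := by abel
      have h1 : ν (-x) + ν (g - -x) = ν g := by
        rw [e1, hsym (-g - x), hsym x]
        rw [hsym g] at hx
        linarith
      rcases hind (-x) h1 with h' | h'
      · exact Or.inl (neg_eq_zero.mp h')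
      · exact Or.inr (neg_eq_iff_eq_neg.mp h')
    have hmg : m • (-g) = n • g := by
      rw [← natCast_zsmul, hm, smul_neg, neg_smul, neg_neg]
    rw [← hmg] at heq
    obtain ⟨k, hk⟩ := key_nat ν hν hNBP (-g) hg' hind' m h heq
    exact ⟨-k, by rw [hk, smul_neg, ← neg_smul]⟩
end

section
/- Let p be an extreme point of the closed unit ball of a normed real vector space (X, ‖·‖). If p = p₁ + p₂ with ‖p‖ = ‖p₁‖ + ‖p₂‖, then both p₁ and p₂ are scalar multiples of p. -/
/-!
A nonzero extreme point `p` of the unit ball lies on the unit sphere. If `p = p₁ + p₂` with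
`‖p₁‖ + ‖p₂‖ = ‖p‖ = 1` and both summands nonzero, then `p` is the convex combination, with
weights `‖p₁‖` and `‖p₂‖`, of the unit vectors `p₁ / ‖p₁‖` and `p₂ / ‖p₂‖`; extremality forces
both of them to equal `p`.
-/

open Metric Set

section

variable {X : Type*} [NormedAddCommGroup X] [NormedSpace ℝ X]

lemma inv_norm_smul_mem_closedBall (x : X) : ‖x‖⁻¹ • x ∈ closedBall (0 : X) 1 := by
  rcases eq_or_ne x 0 with rfl | hx
  · simp
  · simpa using (norm_smul_inv_norm (𝕜 := ℝ) hx).le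

lemma norm_eq_one_of_mem_extremePoints_closedBall {p : X}
    (hp : p ∈ extremePoints ℝ (closedBall (0 : X) 1)) (hp0 : p ≠ 0) : ‖p‖ = 1 := by
  have : Nontrivial X := nontrivial_of_ne p 0 hp0
  simpa using extremePoints_closedBall_subset_sphere hp

lemma eq_norm_smul_of_mem_extremePoints_closedBall {p x y : X}
    (hp : p ∈ extremePoints ℝ (closedBall (0 : X) 1)) (hsum : p = x + y)
    (hnorm : ‖p‖ = ‖x‖ + ‖y‖) : x = ‖x‖ • p := by
  rcases eq_or_ne x 0 with rfl | hx
  · simp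
  rcases eq_or_ne y 0 with rfl | hy
  · rw [add_zero] at hsum
    subst hsum
    rw [norm_eq_one_of_mem_extremePoints_closedBall hp hx, one_smul]
  have hx_pos : 0 < ‖x‖ := norm_pos_iff.2 hx
  have hy_pos : 0 < ‖y‖ := norm_pos_iff.2 hy
  have hp_norm : ‖p‖ = 1 :=
    norm_eq_one_of_mem_extremePoints_closedBall hp (norm_pos_iff.1 (by linarith))
  have hseg : p ∈ openSegment ℝ (‖x‖⁻¹ • x) (‖y‖⁻¹ • y) :=
    ⟨‖x‖, ‖y‖, hx_pos, hy_pos, by linarith, by simp [smul_smul, hx_pos.ne', hy_pos.ne', hsum]⟩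
  have hx_unit : ‖x‖⁻¹ • x = p :=
    hp.2 (inv_norm_smul_mem_closedBall x) (inv_norm_smul_mem_closedBall y) hseg
  rw [← hx_unit, smul_smul, mul_inv_cancel₀ hx_pos.ne', one_smul]

end

theorem stmt6 {X : Type*} [NormedAddCommGroup X] [NormedSpace ℝ X]
    (p p₁ p₂ : X) (hp : p ∈ Set.extremePoints ℝ (Metric.closedBall (0:X) 1))
    (hsum : p = p₁ + p₂) (hnorm : ‖p‖ = ‖p₁‖ + ‖p₂‖) :
    (∃ s : ℝ, p₁ = s • p) ∧ (∃ t : ℝ, p₂ = t • p) := by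
  refine ⟨⟨‖p₁‖, eq_norm_smul_of_mem_extremePoints_closedBall hp hsum hnorm⟩,
    ⟨‖p₂‖, eq_norm_smul_of_mem_extremePoints_closedBall (y := p₁) hp ?_ ?_⟩⟩
  · rw [hsum, add_comm]
  · rw [hnorm, add_comm]
end

section
/- Let (X, ‖·‖) be a real normed vector space that has nonbranching optimal transport plans (with respect to the group structure of (X,+) and the norm). If p₁,…,p_n are linearly independent extreme points of the closed unit ball and λ₁,…,λ_n are nonzero reals, then ‖Σ_i λ_i p_i‖ = Σ_i |λ_i| ‖p_i‖ = Σ_i |λ_i|. -/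
/-!
Append `g₀ = -∑ λᵢ pᵢ` to the vectors `gᵢ = λᵢ pᵢ` and take a nonbranching plan `f` for
`g₀, …, gₙ`. Each `fᵢⱼ` lies on a geodesic from `0` to `gᵢ`, and since `pᵢ` is an extreme point
of the unit ball this forces `fᵢⱼ ∈ ℝ pᵢ`. For `i, j ≥ 1` antisymmetry then gives
`fᵢⱼ ∈ ℝ pᵢ ∩ ℝ pⱼ = 0`, so all mass is routed through `g₀`: `gᵢ = fᵢ₀` and
`‖g₀‖ = ∑ᵢ ‖f₀ᵢ‖ = ∑ᵢ ‖gᵢ‖ = ∑ᵢ |λᵢ|`.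
-/

open Metric Set

lemma norm_add_norm_sub_eq_of_norm_sum_eq {ι E : Type*} [SeminormedAddCommGroup E]
    {s : Finset ι} {f : ι → E} {g : E} (hg : g = ∑ j ∈ s, f j) (hnorm : ‖g‖ = ∑ j ∈ s, ‖f j‖)
    {j : ι} (hj : j ∈ s) : ‖f j‖ + ‖g - f j‖ = ‖g‖ := by
  classical
  have hle : ‖g - f j‖ ≤ ‖g‖ - ‖f j‖ :=
    calc ‖g - f j‖ = ‖∑ k ∈ s.erase j, f k‖ := by rw [hg, ← Finset.sum_erase_add _ _ hj]; abel_nf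
      _ ≤ ∑ k ∈ s.erase j, ‖f k‖ := norm_sum_le _ _
      _ = ‖g‖ - ‖f j‖ := by rw [hnorm, ← Finset.sum_erase_add _ _ hj]; ring
  linarith [norm_sub_norm_le g (f j)]

section ExtremePoints

variable {X : Type*} [NormedAddCommGroup X] [NormedSpace ℝ X]

lemma eq_norm_smul_of_add_eq_mem_extremePoints_closedBall {p y z : X}
    (hp : p ∈ extremePoints ℝ (closedBall (0 : X) 1)) (hyz : y + z = p)
    (hnorm : ‖y‖ + ‖z‖ = 1) : y = ‖y‖ • p := by
  rcases eq_or_ne y 0 with rfl | hy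
  · simp
  rcases eq_or_ne z 0 with rfl | hz
  · rw [add_zero] at hyz
    rw [norm_zero, add_zero] at hnorm
    rw [hnorm, one_smul, hyz]
  have hy' : 0 < ‖y‖ := norm_pos_iff.2 hy
  have hz' : 0 < ‖z‖ := norm_pos_iff.2 hz
  have hunit : ∀ w : X, w ≠ 0 → ‖w‖⁻¹ • w ∈ closedBall (0 : X) 1 := fun w hw => by
    simp [norm_smul, inv_mul_cancel₀ (norm_ne_zero_iff.2 hw)]
  -- `p = ‖y‖ • (y / ‖y‖) + ‖z‖ • (z / ‖z‖)` is a convex combination of two unit vectors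
  have hseg : p ∈ openSegment ℝ (‖y‖⁻¹ • y) (‖z‖⁻¹ • z) :=
    ⟨‖y‖, ‖z‖, hy', hz', hnorm, by
      rw [smul_inv_smul₀ hy'.ne', smul_inv_smul₀ hz'.ne', hyz]⟩
  have hyp : ‖y‖⁻¹ • y = p := hp.2 (hunit y hy) (hunit z hz) hseg
  rw [← hyp, smul_inv_smul₀ hy'.ne']

lemma exists_eq_smul_of_norm_add_norm_sub_eq {p h : X} {l : ℝ}
    (hp : p ∈ extremePoints ℝ (closedBall (0 : X) 1)) (hp1 : ‖p‖ = 1)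
    (heq : ‖h‖ + ‖l • p - h‖ = ‖l • p‖) : ∃ c : ℝ, h = c • p := by
  rcases eq_or_ne l 0 with rfl | hl
  · refine ⟨0, ?_⟩
    simp only [zero_smul, zero_sub, norm_neg, norm_zero] at heq
    simpa using heq
  have hsplit : l⁻¹ • h + l⁻¹ • (l • p - h) = p := by
    rw [← smul_add, add_sub_cancel, inv_smul_smul₀ hl]
  have hnorm : ‖l⁻¹ • h‖ + ‖l⁻¹ • (l • p - h)‖ = 1 := by
    rw [norm_smul, norm_smul, ← mul_add, heq, norm_smul, hp1, mul_one, norm_inv,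
      inv_mul_cancel₀ (norm_ne_zero_iff.2 hl)]
  refine ⟨l * ‖l⁻¹ • h‖, ?_⟩
  rw [mul_smul, ← eq_norm_smul_of_add_eq_mem_extremePoints_closedBall hp hsplit hnorm,
    smul_inv_smul₀ hl]

lemma LinearIndependent.transportPlan_succ_succ_eq_zero {n : ℕ} {p : Fin n → X}
    (hli : LinearIndependent ℝ p) (hext : ∀ i, p i ∈ extremePoints ℝ (closedBall (0 : X) 1))
    {lam : Fin n → ℝ} {g : Fin (n + 1) → X} (hg : ∀ i, g i.succ = lam i • p i)
    {f : Fin (n + 1) → Fin (n + 1) → X} (hanti : ∀ i j, f i j = -f j i) (hdiag : ∀ i, f i i = 0)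
    (hsum : ∀ i, g i = ∑ j, f i j) (hnorm : ∀ i, ‖g i‖ = ∑ j, ‖f i j‖) (i k : Fin n) :
    f i.succ k.succ = 0 := by
  rcases eq_or_ne i k with rfl | hik
  · exact hdiag _
  have hline : ∀ a b : Fin n, ∃ c : ℝ, f a.succ b.succ = c • p a := fun a b => by
    refine exists_eq_smul_of_norm_add_norm_sub_eq (l := lam a) (hext a)
      (norm_eq_one_of_mem_extremePoints_closedBall (hext a) (hli.ne_zero a)) ?_
    rw [← hg]
    exact norm_add_norm_sub_eq_of_norm_sum_eq (hsum _) (hnorm _) (Finset.mem_univ _)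
  obtain ⟨c, hc⟩ := hline i k
  obtain ⟨d, hd⟩ := hline k i
  have hcd : c • p i + d • p k = 0 := by
    rw [← hc, ← hd, hanti, neg_add_cancel]
  rw [hc, ((LinearIndepOn.pair_iff p hik).1 (hli.linearIndepOn _) c d hcd).1, zero_smul]

end ExtremePoints

lemma norm_zero_eq_sum_of_transportPlan {E : Type*} [SeminormedAddCommGroup E] {n : ℕ}
    {g : Fin (n + 1) → E} {f : Fin (n + 1) → Fin (n + 1) → E} (hanti : ∀ i j, f i j = -f j i)
    (hdiag : f 0 0 = 0) (hsum : ∀ i, g i = ∑ j, f i j) (hnorm : ‖g 0‖ = ∑ j, ‖f 0 j‖)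
    (hstar : ∀ i k : Fin n, f i.succ k.succ = 0) : ‖g 0‖ = ∑ k : Fin n, ‖g k.succ‖ := by
  rw [hnorm, Fin.sum_univ_succ, hdiag, norm_zero, zero_add]
  refine Finset.sum_congr rfl fun k _ => ?_
  rw [hanti, norm_neg, hsum, Fin.sum_univ_succ]
  simp [hstar]

theorem stmt7_general {X : Type*} [NormedAddCommGroup X] [NormedSpace ℝ X]
    (hNBP : HasNBP (fun x : X => ‖x‖))
    (n : ℕ) (p : Fin n → X) (hli : LinearIndependent ℝ p)
    (hext : ∀ i, p i ∈ Set.extremePoints ℝ (Metric.closedBall (0:X) 1))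
    (lam : Fin n → ℝ) :
    ‖∑ i, lam i • p i‖ = ∑ i, |lam i| * ‖p i‖ ∧
    ‖∑ i, lam i • p i‖ = ∑ i, |lam i| := by
  have hp1 (i : Fin n) : ‖p i‖ = 1 :=
    norm_eq_one_of_mem_extremePoints_closedBall (hext i) (hli.ne_zero i)
  set S := ∑ i, lam i • p i
  set g : Fin (n + 1) → X := Fin.cons (-S) fun i => lam i • p i with hg
  obtain ⟨f, hanti, hdiag, hsum, hnorm⟩ :=
    hNBP (n + 1) g (by rw [hg, Fin.sum_cons, neg_add_cancel])
  have hgsucc (i : Fin n) : g i.succ = lam i • p i := Fin.cons_succ _ _ _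
  have hS : ‖S‖ = ∑ i, |lam i| :=
    calc ‖S‖ = ‖g 0‖ := by rw [hg, Fin.cons_zero, norm_neg]
      _ = ∑ k : Fin n, ‖g k.succ‖ :=
        norm_zero_eq_sum_of_transportPlan hanti (hdiag 0) hsum (hnorm 0)
          (hli.transportPlan_succ_succ_eq_zero hext hgsucc hanti hdiag hsum hnorm)
      _ = ∑ i, |lam i| := by simp [hgsucc, norm_smul, hp1]
  exact ⟨by simp [hS, hp1], hS⟩

theorem stmt7 {X : Type*} [NormedAddCommGroup X] [NormedSpace ℝ X]
    (hNBP : HasNBP (fun x : X => ‖x‖))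
    (n : ℕ) (p : Fin n → X) (hli : LinearIndependent ℝ p)
    (hext : ∀ i, p i ∈ Set.extremePoints ℝ (Metric.closedBall (0:X) 1))
    (lam : Fin n → ℝ) (hlam : ∀ i, lam i ≠ 0) :
    ‖∑ i, lam i • p i‖ = ∑ i, |lam i| * ‖p i‖ ∧
    ‖∑ i, lam i • p i‖ = ∑ i, |lam i| :=
  stmt7_general hNBP n p hli hext lam
end

section
/- Let G be an infinite cyclic group generated by g with a norm |·| making it a normed Abelian group. Then G has collinear zero-mean triples if and only if |ng| = n|g| for all natural numbers n. -/
theorem stmt9 {G : Type*} [AddCommGroup G] (ν : G → ℝ) (hν : IsGroupNorm ν)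
    (g : G) (hgen : ∀ x : G, ∃ k : ℤ, x = k • g)
    (hinf : ∀ k : ℤ, k ≠ 0 → k • g ≠ 0) :
    HasCZT ν ↔ ∀ n : ℕ, ν (n • g) = n * ν g := by
  obtain ⟨hpos, htri, hneg, hzero⟩ := hν
  have hne : ∀ n : ℕ, n ≠ 0 → (n : ℕ) • g ≠ 0 := by
    intro n hn h
    exact hinf n (by exact_mod_cast hn) (by rwa [natCast_zsmul])
  have hg1 : g ≠ 0 := by
    have := hne 1 one_ne_zero; simpa using this
  have hgpos : 0 < ν g :=
    lt_of_le_of_ne (hpos g) (fun h => hg1 ((hzero g).mp h.symm))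
  constructor
  · intro hczt
    have hdouble : ∀ x : G, 2 • x ≠ 0 → ν (2 • x) = 2 * ν x := by
      intro x hx
      have hsum : x + x + (-(2 • x)) = 0 := by
        rw [two_nsmul]; abel
      rcases hczt x x (-(2 • x)) hsum with h | h | h
      · rw [hneg] at h; rw [← h]; ring
      · rw [hneg] at h
        exact absurd ((hzero _).mp (by linarith)) hx
      · rw [hneg] at h
        exact absurd ((hzero _).mp (by linarith)) hx
    intro n
    induction n using Nat.strong_induction_on with
    | _ n ih =>
      match n with
      | 0 => simpa using (hzero 0).mpr rfl
      | 1 => simp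
      | (n+2) =>
        have ihn1 : ν ((n+1) • g) = (n+1 : ℕ) * ν g := ih (n+1) (by omega)
        have ihn : ν (n • g) = (n : ℕ) * ν g := ih n (by omega)
        have hsum : g + (n+1) • g + (-((n+2) • g)) = 0 := by
          have h1 : (n+2) • g = (n+1) • g + g := succ_nsmul g (n+1)
          rw [h1]; abel
        have hd : ν ((2*n+2) • g) = 2 * ((n+1 : ℕ) * ν g) := by
          have h2 : (2*n+2) • g = 2 • ((n+1) • g) := by
            rw [smul_smul]; ring_nf
          rw [h2, hdouble _ (by rw [← h2]; exact hne (2*n+2) (by omega)), ihn1]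
        rcases hczt _ _ _ hsum with h | h | h
        · rw [hneg, ihn1] at h
          rw [← h]; push_cast; ring
        · -- problem case: ν ((n+2)•g) = n * ν g
          rw [hneg, ihn1] at h
          exfalso
          have hnu : ν ((n+2) • g) = (n : ℕ) * ν g := by push_cast at h ⊢; linarith
          have hsum2 : n • g + (n+2) • g + (-((2*n+2) • g)) = 0 := by
            have h3 : (2*n+2) • g = n • g + (n+2) • g := by
              rw [← add_nsmul]; ring_nf
            rw [h3]; abel
          rcases hczt _ _ _ hsum2 with h2 | h2 | h2 <;>
            rw [hneg] at h2 <;> rw [ihn, hnu, hd] at h2 <;> push_cast at h2 <;> nlinarith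
        · rw [hneg, ihn1] at h
          exfalso
          have := hpos ((n+2) • g)
          have hnz : ν ((n+2) • g) ≠ 0 := fun h0 => hne (n+2) (by omega) ((hzero _).mp h0)
          have : 0 < ν ((n+2) • g) := lt_of_le_of_ne this (Ne.symm hnz)
          push_cast at h
          nlinarith [Nat.cast_nonneg (α := ℝ) n]
  · intro hhom
    have hint : ∀ k : ℤ, ν (k • g) = (k.natAbs : ℝ) * ν g := by
      intro k
      rcases Int.natAbs_eq k with hk | hk
      · rw [hk, natCast_zsmul]; exact hhom _
      · rw [hk, neg_zsmul, hneg, natCast_zsmul, hhom]; simp [Int.natAbs_abs]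
    intro a b c habc
    obtain ⟨p, hp⟩ := hgen a
    obtain ⟨q, hq⟩ := hgen b
    obtain ⟨r, hr⟩ := hgen c
    have hpqr : p + q + r = 0 := by
      by_contra hne0
      exact hinf _ hne0 (by rw [add_zsmul, add_zsmul, ← hp, ← hq, ← hr]; exact habc)
    subst hp hq hr
    rw [hint p, hint q, hint r]
    have : p.natAbs + q.natAbs = r.natAbs ∨ p.natAbs + r.natAbs = q.natAbs ∨
        q.natAbs + r.natAbs = p.natAbs := by omega
    rcases this with h | h | h
    · left; rw [← h]; push_cast; ring
    · right; left; rw [← h]; push_cast; ring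
    · right; right; rw [← h]; push_cast; ring
end

section
/- There is no norm on ℤ/nℤ with n odd, n ≥ 3, satisfying the collinear zero-mean triples property. More precisely: for any norm |·| on ℤ_n (n odd, n ≥ 3) there exists a zero-mean triple a+b+c = 0 for which none of |a|+|b| = |c|, |a|+|c| = |b|, |b|+|c| = |a| holds. -/
theorem stmt10 (n : ℕ) (hodd : Odd n) (hn : 3 ≤ n)
    (ν : ZMod n → ℝ) (hν : IsGroupNorm ν) :
    ∃ a b c : ZMod n, a + b + c = 0 ∧
      ¬(ν a + ν b = ν c ∨ ν a + ν c = ν b ∨ ν b + ν c = ν a) := by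
  obtain ⟨hpos, hadd, hneg, hzero⟩ := hν
  haveI : NeZero n := ⟨by omega⟩
  haveI : Fact (1 < n) := ⟨by omega⟩
  -- find a maximizer of ν
  obtain ⟨g, -, hg⟩ := Finset.exists_max_image (Finset.univ : Finset (ZMod n)) ν ⟨0, Finset.mem_univ 0⟩
  have hg' : ∀ x : ZMod n, ν x ≤ ν g := fun x => hg x (Finset.mem_univ x)
  have hgne : g ≠ 0 := by
    intro h
    have h1 : ν (1 : ZMod n) ≤ ν g := hg' 1
    have h2 : ν g = 0 := (hzero g).mpr h
    have h3 : ν (1 : ZMod n) = 0 := le_antisymm (h2 ▸ h1) (hpos 1)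
    exact one_ne_zero ((hzero 1).mp h3)
  have hνg : 0 < ν g := lt_of_le_of_ne (hpos g) (fun h => hgne ((hzero g).mp h.symm))
  have htwo : (g + g : ZMod n) ≠ 0 := by
    intro h
    have hu : IsUnit (2 : ZMod n) := by
      rw [show ((2 : ZMod n)) = ((2 : ℕ) : ZMod n) by norm_num, ZMod.isUnit_iff_coprime]
      exact Nat.coprime_two_left.mpr hodd
    have : (2 : ZMod n) * g = 0 := by rw [two_mul]; exact h
    exact hgne (by simpa [this] using (hu.mul_right_eq_zero).mp this)
  refine ⟨g, g, -(g + g), by abel, ?_⟩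
  rintro (h | h | h)
  · -- 2 ν g = ν (g+g) ≤ ν g, so ν g ≤ 0
    rw [hneg] at h
    have := hg' (g + g)
    have : ν g ≤ 0 := by linarith
    exact hgne ((hzero g).mp (le_antisymm this (hpos g)))
  · rw [hneg] at h
    have h0 : ν (g + g) = 0 := by linarith
    exact htwo ((hzero _).mp h0)
  · rw [hneg] at h
    have h0 : ν (g + g) = 0 := by linarith
    exact htwo ((hzero _).mp h0)
end

section
/- For every m ≥ 2, there is no norm on the cyclic group ℤ/2^{m+1}ℤ that has collinear zero-mean triples. -/
private lemma aux_stmt11 (m : ℕ) (hm : 2 ≤ m) (ν : ZMod (2 ^ (m + 1)) → ℝ)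
    (hpos : ∀ g, 0 ≤ ν g) (htri : ∀ g h, ν (g + h) ≤ ν g + ν h)
    (hneg : ∀ g, ν (-g) = ν g) (hzero : ∀ g, ν g = 0 ↔ g = 0)
    (hCZT : ∀ a b c : ZMod (2 ^ (m + 1)), a + b + c = 0 →
      ν a + ν b = ν c ∨ ν a + ν c = ν b ∨ ν b + ν c = ν a) : False := by
  haveI : Fact (1 < 2 ^ (m + 1)) := ⟨Nat.one_lt_two_pow_iff.mpr (Nat.succ_ne_zero m)⟩
  -- doubling
  have hdbl : ∀ x : ZMod (2^(m+1)), x + x ≠ 0 → ν (x + x) = ν x + ν x := by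
    intro x hx
    rcases hCZT x x (-(x + x)) (by ring) with h | h | h
    · rw [hneg] at h; linarith
    · rw [hneg] at h
      exact absurd ((hzero _).mp (by linarith)) hx
    · rw [hneg] at h
      exact absurd ((hzero _).mp (by linarith)) hx
  -- iterated doubling
  have hpow : ∀ (k : ℕ) (x : ZMod (2^(m+1))), (2 : ZMod (2^(m+1))) ^ k * x ≠ 0 →
      ν ((2 : ZMod (2^(m+1))) ^ k * x) = 2 ^ k * ν x := by
    intro k
    induction k with
    | zero => intro x hx; simp
    | succ k ih =>
      intro x hx
      have hx' : (2 : ZMod (2^(m+1))) ^ k * x ≠ 0 := by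
        intro h
        apply hx
        calc (2:ZMod (2^(m+1))) ^ (k+1) * x = 2 * ((2:ZMod (2^(m+1)))^k * x) := by ring
          _ = 0 := by rw [h, mul_zero]
      have heq : (2 : ZMod (2^(m+1))) ^ (k + 1) * x = (2:ZMod (2^(m+1)))^k * x + (2:ZMod (2^(m+1)))^k * x := by ring
      rw [heq, hdbl _ (by rw [← heq]; exact hx), ih x hx']
      ring
  -- 2^k ≠ 0 for k ≤ m
  have h2k : ∀ k ≤ m, ((2 : ZMod (2^(m+1)))) ^ k ≠ 0 := by
    intro k hk h
    have : ((2 ^ k : ℕ) : ZMod (2^(m+1))) = 0 := by push_cast; exact h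
    have hdvd : 2^(m+1) ∣ 2 ^ k := (ZMod.natCast_eq_zero_iff _ _).mp this
    have := (Nat.pow_dvd_pow_iff_le_right (by norm_num)).mp hdvd
    omega
  have h2m2 : (2 : ZMod (2^(m+1))) ^ (2 * m) = 0 := by
    have : ((2 ^ (2 * m) : ℕ) : ZMod (2^(m+1))) = 0 := by
      rw [ZMod.natCast_eq_zero_iff]
      exact pow_dvd_pow 2 (by omega)
    push_cast at this; exact this
  -- 1 - 2^m times 2^k nonzero for k ≤ m
  have hy0 : ∀ k ≤ m, (2 : ZMod (2^(m+1))) ^ k * (1 - (2:ZMod (2^(m+1)))^m) ≠ 0 := by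
    intro k hk h
    apply h2k k hk
    have : (2 : ZMod (2^(m+1))) ^ k * (1 - (2:ZMod (2^(m+1)))^m) * (1 + (2:ZMod (2^(m+1)))^m)
        = (2:ZMod (2^(m+1)))^k * (1 - (2:ZMod (2^(m+1)))^(2*m)) := by ring
    rw [h, zero_mul] at this
    rw [h2m2] at this
    simpa using this.symm
  have hone : (1 : ZMod (2^(m+1))) ≠ 0 := one_ne_zero
  have hu : 0 < ν 1 := lt_of_le_of_ne (hpos 1) (fun h => hone ((hzero 1).mp h.symm))
  have key1 : ν ((2:ZMod (2^(m+1)))^m) = 2 ^ m * ν 1 := by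
    have := hpow m 1 (by simpa using h2k m le_rfl)
    simpa using this
  have key2 : ν (1 - (2:ZMod (2^(m+1)))^m) = ν 1 := by
    have hmul : (2:ZMod (2^(m+1)))^m * (1 - (2:ZMod (2^(m+1)))^m) = (2:ZMod (2^(m+1)))^m := by
      have : (2:ZMod (2^(m+1)))^m * (1 - (2:ZMod (2^(m+1)))^m) = (2:ZMod (2^(m+1)))^m - (2:ZMod (2^(m+1)))^(2*m) := by ring
      rw [this, h2m2, sub_zero]
    have := hpow m (1 - (2:ZMod (2^(m+1)))^m) (hy0 m le_rfl)
    rw [hmul, key1] at this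
    have h2pos : (0:ℝ) < 2 ^ m := by positivity
    exact (mul_left_cancel₀ (ne_of_gt h2pos) this).symm
  -- triangle
  have htr : ν ((2:ZMod (2^(m+1)))^m) ≤ ν 1 + ν ((2:ZMod (2^(m+1)))^m - 1) := by
    have : (2:ZMod (2^(m+1)))^m = 1 + ((2:ZMod (2^(m+1)))^m - 1) := by ring
    calc ν ((2:ZMod (2^(m+1)))^m) = ν (1 + ((2:ZMod (2^(m+1)))^m - 1)) := by rw [← this]
      _ ≤ ν 1 + ν ((2:ZMod (2^(m+1)))^m - 1) := htri _ _
  have hsym : ν ((2:ZMod (2^(m+1)))^m - 1) = ν 1 := by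
    rw [show (2:ZMod (2^(m+1)))^m - 1 = -(1 - (2:ZMod (2^(m+1)))^m) by ring, hneg, key2]
  rw [key1, hsym] at htr
  have h4 : (4:ℝ) ≤ 2 ^ m := by
    calc (4:ℝ) = 2 ^ 2 := by norm_num
      _ ≤ 2 ^ m := by exact pow_le_pow_right₀ (by norm_num) hm
  nlinarith

theorem stmt11 (m : ℕ) (hm : 2 ≤ m) (ν : ZMod (2 ^ (m + 1)) → ℝ)
    (hν : IsGroupNorm ν) : ¬ HasCZT ν := by
  intro hCZT
  obtain ⟨hpos, htri, hneg, hzero⟩ := hν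
  exact aux_stmt11 m hm ν hpos htri hneg hzero hCZT
end

section
/- There is no norm on ℤ₂ × ℤ₄ that has collinear zero-mean triples. -/
theorem stmt13 (ν : ZMod 2 × ZMod 4 → ℝ) (hν : IsGroupNorm ν) :
    ¬ HasCZT ν := by
  obtain ⟨hpos, hadd, hneg, hzero⟩ := hν
  intro h
  have hp : ∀ g : ZMod 2 × ZMod 4, g ≠ 0 → 0 < ν g := fun g hg =>
    lt_of_le_of_ne (hpos g) (fun e => hg ((hzero g).mp e.symm))
  have p1 : 0 < ν (0,1) := hp _ (by decide)
  have p2 : 0 < ν (0,2) := hp _ (by decide)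
  have p3 : 0 < ν (1,1) := hp _ (by decide)
  have p4 : 0 < ν (1,3) := hp _ (by decide)
  have p5 : 0 < ν (1,0) := hp _ (by decide)
  have p6 : 0 < ν (1,2) := hp _ (by decide)
  have h1 := h (0,1) (0,1) (0,2) (by decide)
  have h2 := h (1,1) (1,1) (0,2) (by decide)
  have h3 := h (1,0) (0,1) (1,3) (by decide)
  have h4 := h (1,2) (0,1) (1,1) (by decide)
  have h5 := h (1,0) (0,2) (1,2) (by decide)
  have e1 : ν (0,1) + ν (0,1) = ν (0,2) := by rcases h1 with e|e|e <;> linarith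
  have e2 : ν (1,1) = ν (0,1) := by rcases h2 with e|e|e <;> linarith
  have h6 := h (1,3) (1,3) (0,2) (by decide)
  have e3 : ν (1,3) = ν (0,1) := by rcases h6 with e|e|e <;> linarith
  have e4 : ν (1,0) = ν (0,2) := by rcases h3 with e|e|e <;> linarith
  have e5 : ν (1,2) = ν (0,2) := by rcases h4 with e|e|e <;> linarith
  rcases h5 with e|e|e <;> linarith
end

section
/- There is no norm on ℤ₂ × ℤ that has collinear zero-mean triples. -/
theorem stmt14 (ν : ZMod 2 × ℤ → ℝ) (hν : IsGroupNorm ν) :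
    ¬ HasCZT ν := by
  obtain ⟨hpos, hadd, hneg, hzero⟩ := hν
  intro hczt
  -- doubling lemma
  have hdbl : ∀ a : ZMod 2 × ℤ, a + a ≠ 0 → ν (a + a) = ν a + ν a := by
    intro a ha
    have hsum : a + a + (-(a + a)) = 0 := by abel
    have hn := hneg (a + a)
    rcases hczt a a (-(a + a)) hsum with h | h | h
    · linarith
    · exfalso; apply ha; rw [← hzero]; linarith
    · exfalso; apply ha; rw [← hzero]; linarith
  have key : ∀ n : ℤ, n ≠ 0 → ν ((1 : ZMod 2), n) = ν ((0 : ZMod 2), n) := by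
    intro n hn
    have hne : (n : ℤ) + n ≠ 0 := by omega
    have e1 : ((1 : ZMod 2), n) + ((1 : ZMod 2), n) = ((0 : ZMod 2), n + n) := by
      simp [Prod.ext_iff]; decide
    have e2 : ((0 : ZMod 2), n) + ((0 : ZMod 2), n) = ((0 : ZMod 2), n + n) := by
      simp [Prod.ext_iff]
    have h1 := hdbl ((1 : ZMod 2), n) (by rw [e1]; simp [Prod.ext_iff, hne])
    have h2 := hdbl ((0 : ZMod 2), n) (by rw [e2]; simp [Prod.ext_iff, hne])
    rw [e1] at h1
    rw [e2] at h2
    linarith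
  set s := ν ((0 : ZMod 2), (1 : ℤ)) with hs_def
  have hs : 0 < s := by
    rcases lt_or_eq_of_le (hpos ((0 : ZMod 2), (1 : ℤ))) with h | h
    · exact h
    · exfalso
      have := (hzero ((0 : ZMod 2), (1 : ℤ))).mp h.symm
      simp [Prod.ext_iff] at this
  set t := ν ((1 : ZMod 2), (0 : ℤ)) with ht_def
  have htne : ((1 : ZMod 2), (0 : ℤ)) ≠ 0 := by
    simp [Prod.ext_iff]
  have ht0 : t ≠ 0 := fun h => htne ((hzero _).mp h)
  have hm1 : ν ((1 : ZMod 2), (-1 : ℤ)) = s := by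
    rw [key (-1) (by norm_num)]
    have e : ((0 : ZMod 2), (-1 : ℤ)) = -((0 : ZMod 2), (1 : ℤ)) := by
      simp [Prod.ext_iff]
    rw [e, hneg]
  have h02 : ν ((0 : ZMod 2), (2 : ℤ)) = s + s := by
    have e : ((0 : ZMod 2), (1 : ℤ)) + ((0 : ZMod 2), (1 : ℤ)) = ((0 : ZMod 2), (2 : ℤ)) := by
      simp [Prod.ext_iff]
    have := hdbl ((0 : ZMod 2), (1 : ℤ)) (by rw [e]; simp [Prod.ext_iff])
    rw [e] at this
    exact this
  have hm2 : ν ((1 : ZMod 2), (-2 : ℤ)) = s + s := by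
    rw [key (-2) (by norm_num)]
    have e : ((0 : ZMod 2), (-2 : ℤ)) = -((0 : ZMod 2), (2 : ℤ)) := by
      simp [Prod.ext_iff]
    rw [e, hneg, h02]
  -- first triple: t = 2s
  have hsum1 : ((1 : ZMod 2), (0 : ℤ)) + ((0 : ZMod 2), (1 : ℤ)) + ((1 : ZMod 2), (-1 : ℤ)) = 0 := by
    simp [Prod.ext_iff]; decide
  have ht2s : t = s + s := by
    rcases hczt _ _ _ hsum1 with h | h | h
    · rw [hm1] at h; exfalso; exact ht0 (by linarith)
    · rw [hm1] at h; exfalso; exact ht0 (by linarith)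
    · rw [hm1] at h; linarith
  -- second triple: t = 4s
  have hsum2 : ((1 : ZMod 2), (0 : ℤ)) + ((0 : ZMod 2), (2 : ℤ)) + ((1 : ZMod 2), (-2 : ℤ)) = 0 := by
    simp [Prod.ext_iff]; decide
  rcases hczt _ _ _ hsum2 with h | h | h
  · rw [h02, hm2] at h; exact ht0 (by linarith)
  · rw [h02, hm2] at h; exact ht0 (by linarith)
  · rw [h02, hm2] at h; linarith
end

section
/- Let G be a torsion-free normed Abelian group with collinear zero-mean triples. For nonzero a, b ∈ G define a ∼ b iff |a - b| < |a| + |b|. Then ∼ is transitive: if a ∼ b and b ∼ c for nonzero a, b, c, then a ∼ c. -/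
theorem stmt16 {G : Type*} [AddCommGroup G] (ν : G → ℝ) (hν : IsGroupNorm ν)
    (htf : ∀ (n : ℕ) (g : G), 1 ≤ n → n • g = 0 → g = 0)
    (hczt : HasCZT ν) (a b c : G) (ha : a ≠ 0) (hb : b ≠ 0) (hc : c ≠ 0)
    (hab : ν (a - b) < ν a + ν b) (hbc : ν (b - c) < ν b + ν c) :
    ν (a - c) < ν a + ν c := by
  obtain ⟨hpos, hadd, hneg, hzero⟩ := hν
  have hne : ∀ g : G, g ≠ 0 → 0 < ν g := fun g hg =>
    lt_of_le_of_ne (hpos g) fun h => hg ((hzero g).mp h.symm)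
  have hsym : ∀ x y : G, ν (x - y) = ν (y - x) := fun x y => by
    rw [← hneg (y - x), neg_sub]
  have hdbl : ∀ g : G, g ≠ 0 → ν (g + g) = 2 * ν g := by
    intro g hg
    have hne2 : (0:ℝ) < ν (g + g) := by
      refine hne _ fun h => hg (htf 2 g (by norm_num) ?_)
      rw [two_nsmul]; exact h
    rcases hczt g g (-(g + g)) (by abel) with h | h | h <;> rw [hneg] at h <;> linarith
  have hpa := hne a ha
  have hpb := hne b hb
  have hpc := hne c hc
  -- a ∼ b gives ν (a-b) = |ν a - ν b|
  have H1 : ν a + ν (a - b) = ν b ∨ ν b + ν (a - b) = ν a := by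
    rcases hczt a (-b) (b - a) (by abel) with h | h | h <;>
      rw [hneg] at h <;> rw [hsym b a] at h
    · linarith
    · exact Or.inl h
    · exact Or.inr h
  have H2 : ν b + ν (b - c) = ν c ∨ ν c + ν (b - c) = ν b := by
    rcases hczt b (-c) (c - b) (by abel) with h | h | h <;>
      rw [hneg] at h <;> rw [hsym c b] at h
    · linarith
    · exact Or.inl h
    · exact Or.inr h
  by_contra hcon
  push_neg at hcon
  have htri : ν (a - c) ≤ ν a + ν c := by
    have h := hadd a (-c)
    rw [hneg] at h
    simpa [sub_eq_add_neg] using h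
  have hac : ν (a - c) = ν a + ν c := le_antisymm htri hcon
  have hr1p := hpos (a - b)
  have hr2p := hpos (b - c)
  have key : ν b = ν a + ν c ∧ ν (a - b) = ν c ∧ ν (b - c) = ν a := by
    rcases hczt (a - b) (b - c) (c - a) (by abel) with h | h | h <;>
      rw [hsym c a] at h <;> rcases H1 with h1 | h1 <;> rcases H2 with h2 | h2 <;>
      exact ⟨by linarith, by linarith, by linarith⟩
  obtain ⟨hb2, hr1, hr2⟩ := key
  -- ν (a + c) = |ν a - ν c|
  have hs : ν a + ν (a + c) = ν c ∨ ν c + ν (a + c) = ν a := by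
    rcases hczt a c (-(a + c)) (by abel) with h | h | h <;> rw [hneg] at h
    · exfalso
      have hcc := hdbl c hc
      rcases hczt (a - c) (c + c) (-(a + c)) (by abel) with h' | h' | h' <;>
        rw [hneg] at h' <;> linarith
    · exact Or.inl h
    · exact Or.inr h
  -- the case b = a + c leads to a contradiction
  have step8 : a + c - b = 0 → False := by
    intro he
    have hb' : a + c = b := sub_eq_zero.mp he
    have haa := hdbl a ha
    have hbca : ν (b - (a + a)) = ν a + ν c := by
      rw [show b - (a + a) = c - a by rw [← hb']; abel, hsym c a, hac]
    rcases hczt (a + a) (-b) (b - (a + a)) (by abel) with h | h | h <;>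
      rw [hneg] at h <;> linarith
  have He1 : ν (a + c - b) = 2 * ν c ∨ a + c - b = 0 := by
    rcases hczt (a - b) c (-(a + c - b)) (by abel) with h | h | h <;> rw [hneg] at h
    · left; linarith
    · right; exact (hzero _).mp (by linarith)
    · right; exact (hzero _).mp (by linarith)
  have He2 : ν (a + c - b) = 2 * ν a ∨ a + c - b = 0 := by
    rcases hczt (c - b) a (-(a + c - b)) (by abel) with h | h | h <;>
      rw [hneg] at h <;> rw [hsym c b] at h
    · left; linarith
    · right; exact (hzero _).mp (by linarith)
    · right; exact (hzero _).mp (by linarith)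
  rcases He1 with h1 | h1
  · rcases He2 with h2 | h2
    · -- ν a = ν c, hence a + c = 0, hence triangle violation on 2b
      have hpq : ν a = ν c := by linarith
      have hs0 : ν (a + c) = 0 := by
        have := hpos (a + c)
        rcases hs with h | h <;> linarith
      have hca : c = -a := by
        have h0 : a + c = 0 := (hzero _).mp hs0
        exact eq_neg_of_add_eq_zero_right h0
      have hbb := hdbl b hb
      have htr : ν (b + b) ≤ ν (b - a) + ν (b + a) := by
        have h := hadd (b - a) (b + a)
        rw [show b - a + (b + a) = b + b by abel] at h
        exact h
      have h1' : ν (b - a) = ν c := by rw [hsym b a]; exact hr1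
      have h2' : ν (b + a) = ν a := by
        rw [hca] at hr2
        rw [show b + a = b - -a by abel]
        exact hr2
      linarith
    · exact step8 h2
  · exact step8 h1
end

section
/- Let G be a torsion-free normed Abelian group with collinear zero-mean triples. Then there exists an injective group homomorphism φ : G → ℝ that is an isometric embedding, i.e. |φ(a) - φ(b)| = |a - b|_G for all a, b ∈ G (equivalently, |φ(g)| = |g|_G for all g). -/
theorem stmt18 {G : Type*} [AddCommGroup G] (ν : G → ℝ) (hν : IsGroupNorm ν)
    (htf : ∀ (n : ℕ) (g : G), 1 ≤ n → n • g = 0 → g = 0)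
    (hczt : HasCZT ν) :
    ∃ φ : G →+ ℝ, Function.Injective φ ∧ ∀ g : G, |φ g| = ν g := by
  classical
  obtain ⟨hnn, htri, hneg, hzero⟩ := hν
  have h0 : ν 0 = 0 := (hzero 0).2 rfl
  by_cases hE : ∃ e : G, e ≠ 0
  case neg =>
    refine ⟨0, ?_, ?_⟩
    · intro a b _
      have ha : a = 0 := by by_contra h; exact hE ⟨a, h⟩
      have hb : b = 0 := by by_contra h; exact hE ⟨b, h⟩
      rw [ha, hb]
    · intro g
      have hg : g = 0 := by by_contra h; exact hE ⟨g, h⟩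
      simp [hg, h0]
  obtain ⟨e, he⟩ := hE
  have hepos : 0 < ν e := lt_of_le_of_ne (hnn e) (fun h => he ((hzero e).1 h.symm))
  -- doubling
  have hdbl : ∀ x : G, ν (x + x) = ν x + ν x := by
    intro x
    rcases hczt x x (-(x + x)) (by abel) with h | h | h
    · rw [hneg] at h; linarith
    · rw [hneg] at h
      have hx0 : ν (x + x) = 0 := by linarith
      have : x = 0 := htf 2 x (by norm_num) (by rw [two_nsmul]; exact (hzero _).1 hx0)
      subst this; simp [h0]
    · rw [hneg] at h
      have hx0 : ν (x + x) = 0 := by linarith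
      have : x = 0 := htf 2 x (by norm_num) (by rw [two_nsmul]; exact (hzero _).1 hx0)
      subst this; simp [h0]
  -- dichotomy
  have hdi : ∀ a b : G, ν (a + b) = ν a + ν b ∨ ν (a + b) = ν b - ν a ∨
      ν (a + b) = ν a - ν b := by
    intro a b
    rcases hczt a b (-(a + b)) (by abel) with h | h | h <;> rw [hneg] at h
    · left; linarith
    · right; left; linarith
    · right; right; linarith
  -- second step along e
  have hB2 : ∀ g : G, ν (g + e) = ν g + ν e → ν (g + e + e) = ν g + ν e + ν e := by
    intro g hg
    have h1 : ν ((g + e) + (g + e)) = ν (g + e) + ν (g + e) := hdbl _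
    have h2 : ν ((g + e) + (g + e)) ≤ ν (g + e + e) + ν g := by
      have := htri (g + e + e) g
      rw [show g + e + e + g = (g + e) + (g + e) by abel] at this
      exact this
    have h3 : ν (g + e + e) ≤ ν (g + e) + ν e := htri _ _
    linarith
  -- key transitivity lemma
  have hLT : ∀ g h : G, ν (g + e) = ν g + ν e → ν (h + e) = ν h + ν e →
      ν (g + h) = ν g + ν h := by
    intro g h hg hh
    have hA1 : ν (g + h + e + e) ≤ ν (g + h) + ν e + ν e := by
      have t1 := htri (g + h + e) e
      have t2 := htri (g + h) e
      linarith
    have hge : ν (g + e + e) ≤ ν (g + h + e + e) + ν h := by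
      have := htri (g + h + e + e) (-h)
      rw [show g + h + e + e + -h = g + e + e by abel, hneg] at this
      exact this
    have hhe : ν (h + e + e) ≤ ν (g + h + e + e) + ν g := by
      have := htri (g + h + e + e) (-g)
      rw [show g + h + e + e + -g = h + e + e by abel, hneg] at this
      exact this
    have hbg := hB2 g hg
    have hbh := hB2 h hh
    rcases hczt (g + e) (h + e) (-(g + h + e + e)) (by abel) with hc | hc | hc <;>
      rw [hneg] at hc
    · have := htri g h
      linarith
    · linarith
    · linarith
  -- closure of positivity under sums
  have hsum : ∀ g h : G, ν (g + e) = ν g + ν e → ν (h + e) = ν h + ν e →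
      ν (g + h + e) = ν (g + h) + ν e := by
    intro g h hg hh
    have hhe2 : ν ((h + e) + e) = ν (h + e) + ν e := by
      rw [hB2 h hh, hh]
    have h1 : ν (g + (h + e)) = ν g + ν (h + e) := hLT g (h + e) hg hhe2
    rw [show g + (h + e) = g + h + e by abel, hh] at h1
    rw [h1, hLT g h hg hh]
    ring
  -- P 0
  have hP0 : ν ((0 : G) + e) = ν (0 : G) + ν e := by rw [zero_add, h0, zero_add]
  -- totality
  have hPtot : ∀ g : G, ν (g + e) = ν g + ν e ∨ ν (-g + e) = ν (-g) + ν e := by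
    intro g
    by_contra hcon
    push_neg at hcon
    obtain ⟨h1, h2⟩ := hcon
    rw [hneg] at h2
    have d1 := hdi g e
    have d2 := hdi (-g) e
    rw [hneg] at d2
    have i1 : ν g + ν g ≤ ν (g + e) + ν (-g + e) := by
      have := htri (g + e) (-(-g + e))
      rw [show g + e + -(-g + e) = g + g by abel, hneg, hdbl g] at this
      exact this
    have i2 : ν e + ν e ≤ ν (g + e) + ν (-g + e) := by
      have := htri (g + e) (-g + e)
      rw [show g + e + (-g + e) = e + e by abel, hdbl e] at this
      exact this
    have hgz : ν g = 0 := by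
      rcases d1 with d | d | d
      · exact absurd d h1
      all_goals rcases d2 with d' | d' | d'
      · exact absurd d' h2
      · linarith [hnn g, hnn e]
      · linarith [hnn g, hnn e]
      · exact absurd d' h2
      · linarith [hnn g, hnn e]
      · linarith [hnn g, hnn e]
    have : g = 0 := (hzero g).1 hgz
    subst this
    exact h1 hP0
  -- exclusivity
  have hexc : ∀ g : G, g ≠ 0 → ν (g + e) = ν g + ν e →
      ν (-g + e) = ν (-g) + ν e → False := by
    intro g hg0 h1 h2
    have := hLT g (-g) h1 h2
    rw [add_neg_cancel, h0, hneg] at this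
    have : ν g = 0 := by linarith
    exact hg0 ((hzero g).1 this)
  -- the map
  set φf : G → ℝ := fun g => if ν (g + e) = ν g + ν e then ν g else -ν g with hφf
  have habs : ∀ g : G, |φf g| = ν g := by
    intro g
    by_cases h : ν (g + e) = ν g + ν e
    · simp only [hφf, if_pos h]; exact abs_of_nonneg (hnn g)
    · simp only [hφf, if_neg h]; rw [abs_neg]; exact abs_of_nonneg (hnn g)
  -- mixed-case helper
  have hmix : ∀ a b : G, ν (a + e) = ν a + ν e → ¬(ν (b + e) = ν b + ν e) →
      φf (a + b) = ν a - ν b := by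
    intro a b ha hb
    have hmb : ν (-b + e) = ν (-b) + ν e := (hPtot b).resolve_left hb
    by_cases hk : ν (a + b + e) = ν (a + b) + ν e
    · have := hLT (a + b) (-b) hk hmb
      rw [show a + b + -b = a by abel, hneg] at this
      simp only [hφf, if_pos hk]
      linarith
    · have hmk : ν (-(a + b) + e) = ν (-(a + b)) + ν e := (hPtot (a + b)).resolve_left hk
      have := hLT a (-(a + b)) ha hmk
      rw [show a + -(a + b) = -b by abel, hneg, hneg] at this
      simp only [hφf, if_neg hk]
      linarith
  have hadd : ∀ g h : G, φf (g + h) = φf g + φf h := by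
    intro g h
    by_cases hg : ν (g + e) = ν g + ν e <;> by_cases hh : ν (h + e) = ν h + ν e
    · have hk := hsum g h hg hh
      simp only [hφf, if_pos hk, if_pos hg, if_pos hh]
      exact hLT g h hg hh
    · rw [hmix g h hg hh]
      simp only [hφf, if_pos hg, if_neg hh]
      ring
    · have := hmix h g hh hg
      rw [add_comm h g] at this
      rw [this]
      simp only [hφf, if_neg hg, if_pos hh]
      ring
    · have hmg : ν (-g + e) = ν (-g) + ν e := (hPtot g).resolve_left hg
      have hmh : ν (-h + e) = ν (-h) + ν e := (hPtot h).resolve_left hh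
      have hs : ν (g + h) = ν g + ν h := by
        have := hLT (-g) (-h) (by rw [hneg] at hmg ⊢; exact hmg) (by rw [hneg] at hmh ⊢; exact hmh)
        rw [show -g + -h = -(g + h) by abel, hneg, hneg, hneg] at this
        exact this
      have hk : ¬(ν (g + h + e) = ν (g + h) + ν e) := by
        intro hk
        have hne : g + h ≠ 0 := by
          intro hz
          rw [hz, h0] at hs
          have hg0 : ν g = 0 := by linarith [hnn g, hnn h]
          have : g = 0 := (hzero g).1 hg0
          subst this
          exact hg hP0
        have hq := hsum (-g) (-h) (by rw [hneg] at hmg ⊢; exact hmg)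
          (by rw [hneg] at hmh ⊢; exact hmh)
        rw [show -g + -h = -(g + h) by abel] at hq
        rw [show ν (-(g+h)) = ν (g+h) from hneg _] at hq
        exact hexc (g + h) hne hk (by rw [hneg]; exact hq)
      simp only [hφf, if_neg hk, if_neg hg, if_neg hh, hs]
      ring
  refine ⟨AddMonoidHom.mk' φf hadd, ?_, ?_⟩
  · intro a b hab
    change φf a = φf b at hab
    have hneg' : φf (-b) = -φf b := by
      have := hadd b (-b)
      rw [add_neg_cancel] at this
      have hz : φf 0 = 0 := by simp only [hφf, if_pos hP0, h0]
      rw [hz] at this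
      linarith
    have : φf (a - b) = 0 := by
      rw [sub_eq_add_neg, hadd, hneg', hab]
      ring
    have : ν (a - b) = 0 := by rw [← habs, this, abs_zero]
    have := (hzero (a - b)).1 this
    exact sub_eq_zero.mp this
  · intro g
    exact habs g
end

section
/- Let G be a normed Abelian group with acyclic nonbranching optimal transport plans. Then G has collinear zero-mean triples: for all g₁, g₂, g₃ ∈ G with g₁ + g₂ + g₃ = 0, one of |g₁|+|g₂| = |g₃|, |g₁|+|g₃| = |g₂|, |g₂|+|g₃| = |g₁| holds. -/
def HasAcyclicNBP {G : Type*} [AddCommGroup G] (ν : G → ℝ) : Prop :=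
  ∀ (n : ℕ) (g : Fin n → G), (∑ i, g i) = 0 →
    ∃ f : Fin n → Fin n → G,
      (∀ i j, f i j = - f j i) ∧ (∀ i, f i i = 0) ∧
      (∀ i, g i = ∑ j, f i j) ∧ (∀ i, ν (g i) = ∑ j, ν (f i j)) ∧
      (SimpleGraph.fromRel (fun i j : Fin n => f i j ≠ 0)).IsAcyclic


theorem stmt19 {G : Type*} [AddCommGroup G] (ν : G → ℝ) (hν : IsGroupNorm ν)
    (hA : HasAcyclicNBP ν) : HasCZT ν := by
  intro a b c habc
  obtain ⟨f, hanti, hdiag, hsum, hnorm, hacyc⟩ := hA 3 ![a, b, c]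
    (by simp [Fin.sum_univ_three, habc])
  have hν0 : ν 0 = 0 := (hν.2.2.2 0).mpr rfl
  have hneg : ∀ g, ν (-g) = ν g := hν.2.2.1
  -- one of the three off-diagonal entries is zero
  have hkey : f 0 1 = 0 ∨ f 0 2 = 0 ∨ f 1 2 = 0 := by
    by_contra h
    push_neg at h
    obtain ⟨h01, h02, h12⟩ := h
    set H := SimpleGraph.fromRel (fun i j : Fin 3 => f i j ≠ 0)
    have a01 : H.Adj 0 1 := ⟨by decide, Or.inl h01⟩
    have a12 : H.Adj 1 2 := ⟨by decide, Or.inl h12⟩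
    have a20 : H.Adj 2 0 := ⟨by decide, Or.inr h02⟩
    refine hacyc (SimpleGraph.Walk.cons a01 (SimpleGraph.Walk.cons a12
      (SimpleGraph.Walk.cons a20 SimpleGraph.Walk.nil))) ?_
    simp [SimpleGraph.Walk.isCycle_def, SimpleGraph.Walk.isTrail_def]
  have ea : ν a = ν (f 0 0) + ν (f 0 1) + ν (f 0 2) := by
    have := hnorm 0; simpa [Fin.sum_univ_three] using this
  have eb : ν b = ν (f 1 0) + ν (f 1 1) + ν (f 1 2) := by
    have := hnorm 1; simpa [Fin.sum_univ_three] using this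
  have ec : ν c = ν (f 2 0) + ν (f 2 1) + ν (f 2 2) := by
    have := hnorm 2; simpa [Fin.sum_univ_three] using this
  have d0 : f 0 0 = 0 := hdiag 0
  have d1 : f 1 1 = 0 := hdiag 1
  have d2 : f 2 2 = 0 := hdiag 2
  have s10 : ν (f 1 0) = ν (f 0 1) := by rw [hanti 1 0, hneg]
  have s20 : ν (f 2 0) = ν (f 0 2) := by rw [hanti 2 0, hneg]
  have s21 : ν (f 2 1) = ν (f 1 2) := by rw [hanti 2 1, hneg]
  rcases hkey with h | h | h
  · left
    rw [ea, eb, ec, d0, d1, d2, s20, s21, h, hν0]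
    have : ν (f 1 0) = 0 := by rw [s10, h, hν0]
    rw [this]; ring
  · right; left
    rw [ea, eb, ec, d0, d1, d2, s10, s21, h, hν0]
    have : ν (f 2 0) = 0 := by rw [s20, h, hν0]
    rw [this]; ring
  · right; right
    rw [ea, eb, ec, d0, d1, d2, s10, s20, h, hν0]
    have : ν (f 2 1) = 0 := by rw [s21, h, hν0]
    rw [this]; ring
end
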